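/- Let 𝒢 = (G_n,‖·‖_n)_{n∈ℕ} be a family of metric groups whose underlying family of groups (G_n) has the (⋆)-property, and let 𝒰 be a nonprincipal ultrafilter on ℕ. Assume there exists (h_n) ∈ ∏_n G_n with lim_{n→𝒰}‖h_n‖_n > 0 (equivalently, the metric ultraproduct 𝒢*_met is nontrivial). Then the infinitesimal subgroup ℰ is contained in Z_𝒰. Moreover, if 𝒢*_met = (∏_n G_n)/ℰ is a simple group, then ℰ = Z_𝒰. -/
import Mathlib


open Filter Set Pointwise ENNReal

/-- `CN N g` : the set of all products of at most `N` conjugates of `g` and `g⁻¹`. -/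
def CN {H : Type*} [Group H] (N : ℕ) (g : H) : Set H :=
  ⋃ m ≤ N, ({x | IsConj g x} ∪ {x | IsConj g⁻¹ x}) ^ m

/-- A family of groups equipped with conjugation-invariant pseudo-norms with values in `[0,∞]`. -/
structure PMFamily where
  G : ℕ → Type
  grp : ∀ n, Group (G n)
  ν : ∀ n, G n → ℝ≥0∞
  norm_one : ∀ n, ν n 1 = 0
  norm_mul : ∀ n (g h : G n), ν n (g * h) ≤ ν n g + ν n h
  norm_inv : ∀ n (g : G n), ν n g⁻¹ = ν n g
  norm_conj : ∀ n (g h : G n), ν n (h * g * h⁻¹) = ν n g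

attribute [instance] PMFamily.grp

namespace PMFamily

variable (𝒢 : PMFamily) (U : Ultrafilter ℕ)

/-- The subgroup of infinitesimal sequences. -/
def E : Subgroup (∀ n, 𝒢.G n) where
  carrier := {g | ∀ ε : ℝ≥0∞, 0 < ε → {n | 𝒢.ν n (g n) < ε} ∈ U}
  one_mem' := by
    intro ε hε
    have h : {n | 𝒢.ν n ((1 : ∀ n, 𝒢.G n) n) < ε} = Set.univ := by
      ext n; simpa [𝒢.norm_one n] using hε
    show {n | 𝒢.ν n ((1 : ∀ n, 𝒢.G n) n) < ε} ∈ U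
    rw [h]
    exact Filter.univ_mem
  mul_mem' := by
    intro g h hg hh ε hε
    have h2 : (0 : ℝ≥0∞) < ε / 2 := ENNReal.half_pos hε.ne'
    have key : {n | 𝒢.ν n (g n) < ε / 2} ∩ {n | 𝒢.ν n (h n) < ε / 2} ⊆
        {n | 𝒢.ν n ((g * h) n) < ε} := by
      rintro n ⟨h1, h1'⟩
      simp only [Set.mem_setOf_eq] at h1 h1' ⊢
      calc 𝒢.ν n ((g * h) n) = 𝒢.ν n (g n * h n) := rfl
        _ ≤ 𝒢.ν n (g n) + 𝒢.ν n (h n) := 𝒢.norm_mul n _ _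
        _ < ε / 2 + ε / 2 := ENNReal.add_lt_add h1 h1'
        _ = ε := ENNReal.add_halves ε
    exact Filter.mem_of_superset (Filter.inter_mem (hg _ h2) (hh _ h2)) key
  inv_mem' := by
    intro g hg ε hε
    have h : {n | 𝒢.ν n (g⁻¹ n) < ε} = {n | 𝒢.ν n (g n) < ε} := by
      ext n; simp only [Set.mem_setOf_eq, Pi.inv_apply, 𝒢.norm_inv n]
    show {n | 𝒢.ν n (g⁻¹ n) < ε} ∈ U
    rw [h]
    exact hg ε hε

theorem mem_E {g : ∀ n, 𝒢.G n} :
    g ∈ 𝒢.E U ↔ ∀ ε : ℝ≥0∞, 0 < ε → {n | 𝒢.ν n (g n) < ε} ∈ U := Iff.rfl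

instance normal_E : (𝒢.E U).Normal := by
  constructor
  intro g hg h
  rw [mem_E] at hg ⊢
  intro ε hε
  have heq : {n | 𝒢.ν n ((h * g * h⁻¹) n) < ε} = {n | 𝒢.ν n (g n) < ε} := by
    ext n
    simp only [Set.mem_setOf_eq, Pi.mul_apply, Pi.inv_apply, 𝒢.norm_conj n]
  rw [heq]
  exact hg ε hε

/-- The metric ultraproduct. -/
abbrev Q := (∀ n, 𝒢.G n) ⧸ 𝒢.E U

/-- The limit of the norms along the ultrafilter, on the product group. -/
noncomputable def pnorm (g : ∀ n, 𝒢.G n) : ℝ≥0∞ :=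
  Filter.limsup (fun n => 𝒢.ν n (g n)) U

/-- The induced norm on the metric ultraproduct. -/
noncomputable def qnorm (x : 𝒢.Q U) : ℝ≥0∞ := 𝒢.pnorm U (Quotient.out x)

/-- The open ball of radius `ε` around the identity in the metric ultraproduct. -/
def ball (ε : ℝ≥0∞) : Set (𝒢.Q U) := {x | 𝒢.qnorm U x < ε}

/-- Metrically internal subsets of the metric ultraproduct. -/
def internalSet (Xn : ∀ n, Set (𝒢.G n)) : Set (𝒢.Q U) :=
  (QuotientGroup.mk : (∀ n, 𝒢.G n) → 𝒢.Q U) '' {g | ∀ n, g n ∈ Xn n}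

/-- The finitary subgroup of the metric ultraproduct: classes of uniformly bounded
sequences (equivalently, elements of finite norm). -/
def finSubgroup : Subgroup (𝒢.Q U) where
  carrier := {x | ∃ g : ∀ n, 𝒢.G n, QuotientGroup.mk g = x ∧
    ∃ C : ℝ≥0∞, C ≠ ⊤ ∧ ∀ n, 𝒢.ν n (g n) ≤ C}
  one_mem' := ⟨1, rfl, 0, by simp, fun n => by simp [𝒢.norm_one n]⟩
  mul_mem' := by
    rintro x y ⟨g, rfl, C, hC, hg⟩ ⟨h, rfl, D, hD, hh⟩
    refine ⟨g * h, rfl, C + D, ENNReal.add_ne_top.mpr ⟨hC, hD⟩, fun n => ?_⟩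
    exact le_trans (𝒢.norm_mul n (g n) (h n)) (add_le_add (hg n) (hh n))
  inv_mem' := by
    rintro x ⟨g, rfl, C, hC, hg⟩
    exact ⟨g⁻¹, rfl, C, hC, fun n => by rw [Pi.inv_apply, 𝒢.norm_inv n]; exact hg n⟩

end PMFamily

/-- `Ng g = min {n : C_n(g,G) = G}` (and `⊤` if there is no such `n`). -/
noncomputable def Ng {H : Type*} [Group H] (g : H) : ℕ∞ :=
  sInf {x : ℕ∞ | ∃ m : ℕ, x = m ∧ CN m g = Set.univ}

/-- The `(⋆)`-property for a family of groups. -/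
def StarProp (G : ℕ → Type) [∀ n, Group (G n)] : Prop :=
  (∃ N : ℕ, ∀ n, ∃ g : G n, CN N g = Set.univ) ∧
  (∀ k : ℕ, ∃ l : ℕ, ∀ n (g h : G n),
    (l : ℕ∞) ≤ Ng g → (l : ℕ∞) ≤ Ng h → (k : ℕ∞) ≤ Ng (g * h))

/-- The set `Z_𝒰` of sequences whose coordinates need more and more conjugates
to normally generate, along `𝒰`. -/
def ZU (G : ℕ → Type) [∀ n, Group (G n)] (U : Ultrafilter ℕ) : Set (∀ n, G n) :=
  {g | ∀ k : ℕ, {n | (k : ℕ∞) < Ng (g n)} ∈ U}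

section aux
variable {H K : Type*} [Group H] [Group K]

def Sset (g : H) : Set H := {x | IsConj g x} ∪ {x | IsConj g⁻¹ x}

lemma CN_def (N : ℕ) (g : H) : CN N g = ⋃ m ≤ N, (Sset g) ^ m := rfl

lemma mem_CN {g x : H} {N : ℕ} : x ∈ CN N g ↔ ∃ m ≤ N, x ∈ (Sset g) ^ m := by
  rw [CN_def]; simp

lemma one_mem_CN (N : ℕ) (g : H) : (1 : H) ∈ CN N g :=
  mem_CN.2 ⟨0, Nat.zero_le _, by simp [pow_zero, Set.mem_one]⟩

lemma CN_mono {g : H} {m m' : ℕ} (h : m ≤ m') : CN m g ⊆ CN m' g := by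
  intro x hx
  obtain ⟨j, hj, hx⟩ := mem_CN.1 hx
  exact mem_CN.2 ⟨j, hj.trans h, hx⟩

lemma Sset_inv {g x : H} (h : x ∈ Sset g) : x⁻¹ ∈ Sset g := by
  rcases h with h | h
  · obtain ⟨c, hc⟩ := isConj_iff.1 h
    exact Or.inr (isConj_iff.2 ⟨c, by rw [← hc]; group⟩)
  · obtain ⟨c, hc⟩ := isConj_iff.1 h
    exact Or.inl (isConj_iff.2 ⟨c, by rw [← hc]; group⟩)

lemma Sset_conj {g x : H} (c : H) (h : x ∈ Sset g) : c * x * c⁻¹ ∈ Sset g := by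
  rcases h with h | h
  · exact Or.inl (h.trans (isConj_iff.2 ⟨c, rfl⟩))
  · exact Or.inr (h.trans (isConj_iff.2 ⟨c, rfl⟩))

lemma Sset_pow_inv {g x : H} {m : ℕ} (h : x ∈ (Sset g) ^ m) : x⁻¹ ∈ (Sset g) ^ m := by
  induction m generalizing x with
  | zero => simp_all
  | succ m ih =>
    rw [pow_succ] at h
    obtain ⟨a, ha, b, hb, rfl⟩ := Set.mem_mul.1 h
    rw [pow_succ']
    exact Set.mem_mul.2 ⟨b⁻¹, Sset_inv hb, a⁻¹, ih ha, by group⟩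

lemma Sset_pow_conj {g x : H} {m : ℕ} (c : H) (h : x ∈ (Sset g) ^ m) :
    c * x * c⁻¹ ∈ (Sset g) ^ m := by
  induction m generalizing x with
  | zero => simp_all
  | succ m ih =>
    rw [pow_succ] at h ⊢
    obtain ⟨a, ha, b, hb, rfl⟩ := Set.mem_mul.1 h
    exact Set.mem_mul.2 ⟨c * a * c⁻¹, ih ha, c * b * c⁻¹, Sset_conj c hb, by group⟩

lemma CN_mul {g x y : H} {a b : ℕ} (hx : x ∈ CN a g) (hy : y ∈ CN b g) :
    x * y ∈ CN (a + b) g := by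
  obtain ⟨i, hi, hx⟩ := mem_CN.1 hx
  obtain ⟨j, hj, hy⟩ := mem_CN.1 hy
  exact mem_CN.2 ⟨i + j, Nat.add_le_add hi hj, by rw [pow_add]; exact Set.mul_mem_mul hx hy⟩

lemma CN_inv {g x : H} {a : ℕ} (hx : x ∈ CN a g) : x⁻¹ ∈ CN a g := by
  obtain ⟨i, hi, hx⟩ := mem_CN.1 hx
  exact mem_CN.2 ⟨i, hi, Sset_pow_inv hx⟩

lemma CN_conj {g x : H} {a : ℕ} (c : H) (hx : x ∈ CN a g) : c * x * c⁻¹ ∈ CN a g := by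
  obtain ⟨i, hi, hx⟩ := mem_CN.1 hx
  exact mem_CN.2 ⟨i, hi, Sset_pow_conj c hx⟩

lemma Sset_subset_CN {g x : H} {r : ℕ} (hx : x ∈ CN r g) : Sset x ⊆ CN r g := by
  rintro y (hy | hy)
  · obtain ⟨c, hc⟩ := isConj_iff.1 hy
    exact hc ▸ CN_conj c hx
  · obtain ⟨c, hc⟩ := isConj_iff.1 hy
    exact hc ▸ CN_conj c (CN_inv hx)

lemma CN_comp {g x : H} {r m : ℕ} (hx : x ∈ CN r g) : CN m x ⊆ CN (m * r) g := by
  have key : ∀ j : ℕ, (Sset x) ^ j ⊆ CN (j * r) g := by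
    intro j
    induction j with
    | zero => intro y hy; simp only [pow_zero, Set.mem_one] at hy; exact hy ▸ one_mem_CN _ _
    | succ j ih =>
      intro y hy
      rw [pow_succ] at hy
      obtain ⟨a, ha, b, hb, rfl⟩ := Set.mem_mul.1 hy
      have : a * b ∈ CN (j * r + r) g := CN_mul (ih ha) (Sset_subset_CN hx hb)
      rwa [Nat.succ_mul]
  intro y hy
  obtain ⟨j, hj, hy⟩ := mem_CN.1 hy
  exact CN_mono (Nat.mul_le_mul_right r hj) (key j hy)

lemma Ng_le_iff (k : ℕ) (g : H) : Ng g ≤ (k : ℕ∞) ↔ CN k g = Set.univ := by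
  constructor
  · intro h
    have hne : {x : ℕ∞ | ∃ m : ℕ, x = m ∧ CN m g = Set.univ}.Nonempty := by
      by_contra hemp
      rw [Set.not_nonempty_iff_eq_empty] at hemp
      rw [Ng, hemp, sInf_empty] at h
      exact absurd h (by simp)
    obtain ⟨m, hm, hCN⟩ := csInf_mem hne
    rw [Ng, hm] at h
    have : m ≤ k := Nat.cast_le.1 h
    exact Set.eq_univ_of_univ_subset (hCN ▸ CN_mono this)
  · intro h
    exact sInf_le ⟨k, rfl, h⟩

lemma Sset_map (φ : H →* K) {g : H} {x : H} (h : x ∈ Sset g) : φ x ∈ Sset (φ g) := by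
  rcases h with h | h
  · obtain ⟨c, hc⟩ := isConj_iff.1 h
    exact Or.inl (isConj_iff.2 ⟨φ c, by rw [← hc]; simp⟩)
  · obtain ⟨c, hc⟩ := isConj_iff.1 h
    exact Or.inr (isConj_iff.2 ⟨φ c, by rw [← hc]; simp⟩)

lemma CN_map (φ : H →* K) {g x : H} {N : ℕ} (h : x ∈ CN N g) : φ x ∈ CN N (φ g) := by
  obtain ⟨m, hm, hx⟩ := mem_CN.1 h
  refine mem_CN.2 ⟨m, hm, ?_⟩
  clear hm h
  induction m generalizing x with
  | zero => simp only [pow_zero, Set.mem_one] at hx ⊢; rw [hx]; exact map_one φ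
  | succ m ih =>
    rw [pow_succ] at hx ⊢
    obtain ⟨a, ha, b, hb, rfl⟩ := Set.mem_mul.1 hx
    exact Set.mem_mul.2 ⟨φ a, ih ha, φ b, Sset_map φ hb, (map_mul φ a b).symm⟩

lemma CN_map_surj (φ : H →* K) (hφ : Function.Surjective φ) {g : H} {y : K} {N : ℕ}
    (h : y ∈ CN N (φ g)) : ∃ x ∈ CN N g, φ x = y := by
  obtain ⟨m, hm, hy⟩ := mem_CN.1 h
  suffices hs : ∃ x ∈ (Sset g) ^ m, φ x = y by
    obtain ⟨x, hx, hxy⟩ := hs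
    exact ⟨x, mem_CN.2 ⟨m, hm, hx⟩, hxy⟩
  clear hm h
  induction m generalizing y with
  | zero =>
    simp only [pow_zero, Set.mem_one] at hy ⊢
    exact ⟨1, rfl, by rw [hy]; exact map_one φ⟩
  | succ m ih =>
    rw [pow_succ] at hy
    obtain ⟨a, ha, b, hb, rfl⟩ := Set.mem_mul.1 hy
    obtain ⟨xa, hxa, rfl⟩ := ih ha
    have hb' : ∃ xb ∈ Sset g, φ xb = b := by
      rcases hb with hb | hb
      · obtain ⟨c, hc⟩ := isConj_iff.1 hb
        obtain ⟨d, rfl⟩ := hφ c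
        exact ⟨d * g * d⁻¹, Or.inl (isConj_iff.2 ⟨d, rfl⟩), by rw [← hc]; simp⟩
      · obtain ⟨c, hc⟩ := isConj_iff.1 hb
        obtain ⟨d, rfl⟩ := hφ c
        exact ⟨d * g⁻¹ * d⁻¹, Or.inr (isConj_iff.2 ⟨d, rfl⟩), by rw [← hc]; simp⟩
    obtain ⟨xb, hxb, rfl⟩ := hb'
    exact ⟨xa * xb, by rw [pow_succ]; exact Set.mul_mem_mul hxa hxb, map_mul φ xa xb⟩

def CNsub (a : H) : Subgroup H where
  carrier := ⋃ r : ℕ, CN r a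
  one_mem' := Set.mem_iUnion.2 ⟨0, one_mem_CN 0 a⟩
  mul_mem' := by
    rintro x y hx hy
    obtain ⟨r, hr⟩ := Set.mem_iUnion.1 hx
    obtain ⟨s, hs⟩ := Set.mem_iUnion.1 hy
    exact Set.mem_iUnion.2 ⟨r + s, CN_mul hr hs⟩
  inv_mem' := by
    rintro x hx
    obtain ⟨r, hr⟩ := Set.mem_iUnion.1 hx
    exact Set.mem_iUnion.2 ⟨r, CN_inv hr⟩

lemma CNsub_normal (a : H) : (CNsub a).Normal := by
  constructor
  intro x hx c
  obtain ⟨r, hr⟩ := Set.mem_iUnion.1 hx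
  exact Set.mem_iUnion.2 ⟨r, CN_conj c hr⟩

lemma self_mem_CNsub (a : H) : a ∈ CNsub a :=
  Set.mem_iUnion.2 ⟨1, mem_CN.2 ⟨1, le_refl 1, by rw [pow_one]; exact Or.inl (IsConj.refl a)⟩⟩

end aux

lemma PMFamily.norm_le_CN (𝒢 : PMFamily) (n : ℕ) {g x : 𝒢.G n} {N : ℕ}
    (h : x ∈ CN N g) : 𝒢.ν n x ≤ (N : ℝ≥0∞) * 𝒢.ν n g := by
  obtain ⟨m, hm, hx⟩ := mem_CN.1 h
  have key : 𝒢.ν n x ≤ (m : ℝ≥0∞) * 𝒢.ν n g := by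
    clear hm h
    induction m generalizing x with
    | zero =>
      simp only [pow_zero, Set.mem_one] at hx
      simp [hx, 𝒢.norm_one n]
    | succ m ih =>
      rw [pow_succ] at hx
      obtain ⟨a, ha, b, hb, rfl⟩ := Set.mem_mul.1 hx
      have hb' : 𝒢.ν n b = 𝒢.ν n g := by
        rcases hb with hb | hb
        · obtain ⟨c, hc⟩ := isConj_iff.1 hb; rw [← hc, 𝒢.norm_conj n]
        · obtain ⟨c, hc⟩ := isConj_iff.1 hb; rw [← hc, 𝒢.norm_conj n, 𝒢.norm_inv n]
      calc 𝒢.ν n (a * b) ≤ 𝒢.ν n a + 𝒢.ν n b := 𝒢.norm_mul n a b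
        _ ≤ (m : ℝ≥0∞) * 𝒢.ν n g + 𝒢.ν n g := add_le_add (ih ha) hb'.le
        _ = ((m + 1 : ℕ) : ℝ≥0∞) * 𝒢.ν n g := by push_cast; ring
  exact key.trans (mul_le_mul_left (Nat.cast_le.2 hm) _)

lemma E_subset_ZU (𝒢 : PMFamily) (U : Ultrafilter ℕ)
    (hnontriv : ∃ h : ∀ n, 𝒢.G n, 0 < 𝒢.pnorm U h) :
    ((𝒢.E U : Set (∀ n, 𝒢.G n)) ⊆ ZU 𝒢.G U) := by
  intro g hg k
  by_contra hk
  rw [← Ultrafilter.compl_mem_iff_notMem] at hk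
  obtain ⟨h, hpos⟩ := hnontriv
  obtain ⟨ε, hε0, hεlt⟩ := exists_between hpos
  have hdiv : (0 : ℝ≥0∞) < ε / ((k + 1 : ℕ) : ℝ≥0∞) :=
    ENNReal.div_pos hε0.ne' (by simp)
  have hsmall := (𝒢.mem_E U).1 hg _ hdiv
  have hB : {n | CN (k + 1) (g n) = Set.univ} ∈ U := by
    filter_upwards [hk] with n hn
    simp only [Set.mem_compl_iff, Set.mem_setOf_eq, not_lt] at hn
    exact (Ng_le_iff (k + 1) (g n)).1 (hn.trans (by exact_mod_cast Nat.le_succ k))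
  have hub : ∀ᶠ n in (U : Filter ℕ), 𝒢.ν n (h n) ≤ ε := by
    filter_upwards [hB, hsmall] with n h1 h2
    have hmem : h n ∈ CN (k + 1) (g n) := h1 ▸ Set.mem_univ _
    calc 𝒢.ν n (h n) ≤ ((k + 1 : ℕ) : ℝ≥0∞) * 𝒢.ν n (g n) := 𝒢.norm_le_CN n hmem
      _ ≤ ((k + 1 : ℕ) : ℝ≥0∞) * (ε / ((k + 1 : ℕ) : ℝ≥0∞)) := mul_le_mul_right h2.le _
      _ ≤ ε := ENNReal.mul_div_le
  have hle : 𝒢.pnorm U h ≤ ε := Filter.limsup_le_of_le (by isBoundedDefault) hub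
  exact absurd hle (not_le.2 hεlt)


/-- For a family of metric groups with the `(⋆)`-property whose metric
ultraproduct is nontrivial, the infinitesimal subgroup `ℰ` is contained in `Z_𝒰`; moreover,
if the metric ultraproduct is simple then `ℰ = Z_𝒰`. -/
theorem statement16 (𝒢 : PMFamily)
    (hmetric : ∀ n (g : 𝒢.G n), 𝒢.ν n g = 0 ↔ g = 1)
    (U : Ultrafilter ℕ) (hU : (U : Filter ℕ) ≤ Filter.cofinite)
    (hstar : StarProp 𝒢.G)
    (hnontriv : ∃ h : ∀ n, 𝒢.G n, 0 < 𝒢.pnorm U h) :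
    ((𝒢.E U : Set (∀ n, 𝒢.G n)) ⊆ ZU 𝒢.G U) ∧
    (IsSimpleGroup (𝒢.Q U) → (𝒢.E U : Set (∀ n, 𝒢.G n)) = ZU 𝒢.G U) := by
  refine ⟨E_subset_ZU 𝒢 U hnontriv, fun hsimple => ?_⟩
  refine subset_antisymm (E_subset_ZU 𝒢 U hnontriv) ?_
  intro g hg
  by_contra hgE
  obtain ⟨N, hN⟩ := hstar.1
  choose t ht using hN
  set φ := QuotientGroup.mk' (𝒢.E U) with hφ
  have hgne : φ g ≠ 1 := fun hcon => hgE ((QuotientGroup.eq_one_iff g).1 hcon)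
  haveI := CNsub_normal (φ g)
  have htop : Subgroup.normalClosure {φ g} = ⊤ := by
    rcases hsimple.eq_bot_or_eq_top_of_normal _ (Subgroup.normalClosure_normal) with hbot | htop
    · exact absurd (Subgroup.mem_bot.1
        (hbot ▸ Subgroup.subset_normalClosure (Set.mem_singleton _))) hgne
    · exact htop
  have hle : Subgroup.normalClosure {φ g} ≤ CNsub (φ g) :=
    Subgroup.normalClosure_le_normal (by rintro x rfl; exact self_mem_CNsub _)
  have hmem : φ t ∈ CNsub (φ g) := hle (htop ▸ Subgroup.mem_top (φ t))
  obtain ⟨r, hr⟩ := Set.mem_iUnion.1 hmem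
  obtain ⟨p, hp, hpt⟩ := CN_map_surj φ (QuotientGroup.mk'_surjective _) hr
  set e := p⁻¹ * t with he_def
  have he : e ∈ 𝒢.E U := by
    have h1 : φ e = 1 := by rw [he_def, map_mul, map_inv, hpt]; group
    exact (QuotientGroup.eq_one_iff e).1 h1
  have heZ : e ∈ ZU 𝒢.G U := E_subset_ZU 𝒢 U hnontriv he
  obtain ⟨l, hl⟩ := hstar.2 (N + 1)
  have hA1 := hg (l * r)
  have hA2 := heZ l
  obtain ⟨n, hn1, hn2⟩ := Filter.nonempty_of_mem (Filter.inter_mem hA1 hA2)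
  have hpn : p n ∈ CN r (g n) := CN_map (Pi.evalMonoidHom 𝒢.G n) hp
  have hNgp : (l : ℕ∞) ≤ Ng (p n) := by
    by_contra hcon
    push_neg at hcon
    have h1 : CN l (p n) = Set.univ := (Ng_le_iff l (p n)).1 hcon.le
    have h2 : CN (l * r) (g n) = Set.univ :=
      Set.eq_univ_of_univ_subset (h1 ▸ CN_comp hpn)
    exact absurd ((Ng_le_iff (l * r) (g n)).2 h2) (not_le.2 hn1)
  have hn2' : (l : ℕ∞) ≤ Ng (e n) := le_of_lt hn2
  have hkey := hl n (p n) (e n) hNgp hn2'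
  have hte : p n * e n = t n := by
    show p n * (p⁻¹ * t) n = t n
    simp [Pi.mul_apply, Pi.inv_apply]
  rw [hte] at hkey
  have hNgt : Ng (t n) ≤ (N : ℕ∞) := (Ng_le_iff N (t n)).2 (ht n)
  have hfin : (N + 1 : ℕ) ≤ N := by exact_mod_cast hkey.trans hNgt
  omega
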